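/- arXiv:2406.15051 — 2 statements merged into one kernel-verified Lean document; each statement's English description precedes it below -/
import Mathlib

section
/- Let E + p = γp/(γ−1) + q²/(2ρ) with constant q (ideal gas, constant momentum). If the enthalpy relation [φ] = −[h] holds between two states with equal momentum q̄ (where h = (E+p)/ρ), then the discrete momentum source S^q·Δx = (p_R − p_L) − (2ρ_Lρ_R/(ρ_L+ρ_R))·((φ_R − φ_L) + (γ/(γ−1))(p_R/ρ_R − p_L/ρ_L)) equals the momentum flux jump (q̄²/ρ_R + p_R) − (q̄²/ρ_L + p_L). -/
theorem momentum_source_wellbalanced (γ ρL ρR pL pR q φL φR : ℝ)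
    (hγ : 1 < γ) (hρL : 0 < ρL) (hρR : 0 < ρR) (hpL : 0 < pL) (hpR : 0 < pR)
    (hWB : φR - φL = -((γ * pR / ((γ - 1) * ρR) + q ^ 2 / (2 * ρR ^ 2)) -
      (γ * pL / ((γ - 1) * ρL) + q ^ 2 / (2 * ρL ^ 2)))) :
    (pR - pL) - (2 * ρL * ρR / (ρL + ρR)) *
        ((φR - φL) + γ / (γ - 1) * (pR / ρR - pL / ρL)) =
      (q ^ 2 / ρR + pR) - (q ^ 2 / ρL + pL) := by
  have hγ' : γ - 1 ≠ 0 := by linarith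
  have hs : ρL + ρR ≠ 0 := by positivity
  rw [hWB]
  field_simp
  ring
end

section
/- With q̃² = (2ρ_L*ρ_R*/(ρ_L*+ρ_R*))·(2Ê − e^{−s*}·((ρ_L*)^γ + (ρ_R*)^γ)/(γ−1)) and δE as in the previous identity, the common value of (E_K* − q̃²/(2ρ_K*))/(ρ_K*)^γ for K ∈ {L,R} equals e^{−s*}/(γ−1); equivalently, both intermediate states have specific entropy −log(p_K*/(ρ_K*)^γ) = s*, where p_K* = (γ−1)(E_K* − q̃²/(2ρ_K*)). -/
open Real

theorem intermediate_entropy_value (γ ρLs ρRs Ehat ss : ℝ) (hγ : 1 < γ)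
    (hρL : 0 < ρLs) (hρR : 0 < ρRs) :
    let q2 := (2 * ρLs * ρRs / (ρLs + ρRs)) *
      (2 * Ehat - Real.exp (-ss) * (ρLs ^ γ + ρRs ^ γ) / (γ - 1))
    let δE := (1 / (ρLs ^ γ + ρRs ^ γ)) *
      (ρRs ^ γ * (Ehat - q2 / (2 * ρLs)) - ρLs ^ γ * (Ehat - q2 / (2 * ρRs)))
    ((Ehat - δE) - q2 / (2 * ρLs)) / ρLs ^ γ = Real.exp (-ss) / (γ - 1) ∧
      ((Ehat + δE) - q2 / (2 * ρRs)) / ρRs ^ γ = Real.exp (-ss) / (γ - 1) := by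
  intro q2 δE
  have ha : (0:ℝ) < ρLs ^ γ := Real.rpow_pos_of_pos hρL γ
  have hb : (0:ℝ) < ρRs ^ γ := Real.rpow_pos_of_pos hρR γ
  have hg : γ - 1 ≠ 0 := by linarith
  have hs : ρLs + ρRs ≠ 0 := by positivity
  have hab : ρLs ^ γ + ρRs ^ γ ≠ 0 := by positivity
  have hL : ρLs ≠ 0 := hρL.ne'
  have hR : ρRs ≠ 0 := hρR.ne'
  simp only [q2, δE]
  constructor <;> (field_simp; ring)
end
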